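/- Let R, R̄ > 0, let X be a finite set, and let P(x^n, y^n) be a joint probability distribution on X^n × {R, −R̄}^n with all values strictly positive. Let f_i(x^i, y^{i−1}) be betting fractions depending on the side information received so far x^i = (x₁,…,x_i) and the past outcomes y^{i−1}, with 1 + f_i(x^i, y^{i−1})·y_i > 0 everywhere. Then ⟨exp[Σ_{i=1}^n ln(1 + f_i(x^i, y^{i−1})·y_i) − ln P(y^n) − i_{x^n→y^n} + ln Q(y^n)]⟩_{(x^n,y^n)∼P} = 1, where i_{x^n→y^n} = ln(P(y^n‖x^n)/P(y^n)) and P(y^n‖x^n) = ∏_{i=1}^n P(y_i | y^{i−1}, x^i) is the causally conditioned probability. -/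

import Mathlib

/-!
By the chain rule `P(x^n, y^n) = P(y^n‖x^n) · P(x^n‖y^{n-1})`, the integrand
`P · exp[…]` equals `∏ᵢ (1 + fᵢ yᵢ) Q(yᵢ) P(xᵢ | x^{i-1}, y^{i-1})`. Each factor is a
transition kernel for the new symbol `(xᵢ, yᵢ)` given the past: the conditional law of `xᵢ`
sums to one, and since `fᵢ` does not see `yᵢ` while `Q` makes the bet fair
(`Q(R) R = Q(-R̄) R̄`), so does `∑_{yᵢ} (1 + fᵢ yᵢ) Q(yᵢ)`. Summing out the symbols from the
last one backwards gives `1`.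
-/

/-- Outcome value map for binary gambling: `true ↦ R` (win), `false ↦ -R̄` (loss). -/
noncomputable def val (R Rbar : ℝ) (b : Bool) : ℝ := if b then R else -Rbar

/-- The reference distribution `Q` on the two outcomes:
`Q(R) = R̄/(R+R̄)`, `Q(-R̄) = R/(R+R̄)`. -/
noncomputable def Qb (R Rbar : ℝ) (b : Bool) : ℝ :=
  if b then Rbar / (R + Rbar) else R / (R + Rbar)

/-- The causally conditioned factor `P(y_i | y^{i-1}, x^i)` of the joint distribution
`P(x^n, y^n)`, evaluated at the pair of sequences `(x, y)`. -/
noncomputable def condY {X : Type*} [Fintype X] [DecidableEq X] (n : ℕ)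
    (P : (Fin n → X) → (Fin n → Bool) → ℝ) (i : Fin n)
    (x : Fin n → X) (y : Fin n → Bool) : ℝ :=
  (∑ x' : Fin n → X, ∑ y' : Fin n → Bool,
      if (∀ j, j ≤ i → x' j = x j) ∧ (∀ j, j ≤ i → y' j = y j) then P x' y' else 0) /
  (∑ x' : Fin n → X, ∑ y' : Fin n → Bool,
      if (∀ j, j ≤ i → x' j = x j) ∧ (∀ j, j < i → y' j = y j) then P x' y' else 0)

theorem sum_prod_causal_kernel_eq_one {Z : Type*} [Fintype Z] {n : ℕ} [Nonempty (Fin n → Z)]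
    (κ : Fin n → (Fin n → Z) → ℝ) (hcausal : ∀ i z z', (∀ j ≤ i, z j = z' j) → κ i z = κ i z')
    (hnorm : ∀ i z, ∑ a, κ i (Function.update z i a) = 1) :
    ∑ z, ∏ i, κ i z = 1 := by
  revert ‹Nonempty (Fin n → Z)›
  induction n with
  | zero => simp
  | succ n ih =>
    rintro ⟨z₀⟩
    have : Nonempty (Fin n → Z) := ⟨Fin.init z₀⟩
    set κ' : Fin n → (Fin n → Z) → ℝ := fun i z => κ i.castSucc (Fin.snoc z (z₀ (Fin.last n)))
    have hsnoc (i : Fin n) (z z' : Fin n → Z) (a a' : Z) (h : ∀ j ≤ i, z j = z' j) :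
        κ i.castSucc (Fin.snoc z a) = κ i.castSucc (Fin.snoc z' a') :=
      hcausal _ _ _ fun j hj => by
        obtain ⟨j, rfl⟩ := Fin.exists_castSucc_eq.2
          (lt_of_le_of_lt hj (Fin.castSucc_lt_last i)).ne
        simpa using h j (Fin.castSucc_le_castSucc_iff.1 hj)
    have hlast (z : Fin n → Z) : ∑ a, κ (Fin.last n) (Fin.snoc z a) = 1 := by
      simpa [Fin.update_snoc_last] using hnorm (Fin.last n) (Fin.snoc z (z₀ (Fin.last n)))
    have hnorm' (i : Fin n) (z : Fin n → Z) : ∑ a, κ' i (Function.update z i a) = 1 := by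
      simpa [κ', Fin.snoc_update] using hnorm i.castSucc (Fin.snoc z (z₀ (Fin.last n)))
    calc ∑ z, ∏ i, κ i z
        = ∑ z : Fin n → Z, (∏ i, κ' i z) * ∑ a, κ (Fin.last n) (Fin.snoc z a) := by
          rw [← (Fin.snocEquiv fun _ => Z).sum_comp, Fintype.sum_prod_type_right]
          refine Finset.sum_congr rfl fun z _ => ?_
          rw [Finset.mul_sum]
          refine Finset.sum_congr rfl fun a _ => ?_
          rw [show (Fin.snocEquiv fun _ => Z) (a, z) = Fin.snoc z a from rfl,
            Fin.prod_univ_castSucc]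
          congr 1
          exact Finset.prod_congr rfl fun i _ => hsnoc i z z _ _ fun _ _ => rfl
      _ = 1 := by
          simp only [hlast, mul_one]
          exact ih κ' (fun i z z' h => hsnoc i z z' _ _ h) hnorm'

theorem sum_sum_prod_causal_kernel_eq_one {X Y : Type*} [Fintype X] [Fintype Y] {n : ℕ}
    [Nonempty (Fin n → X)] [Nonempty (Fin n → Y)] (K : Fin n → (Fin n → X) → (Fin n → Y) → ℝ)
    (hcausal : ∀ i x x' y y', (∀ j ≤ i, x j = x' j) → (∀ j ≤ i, y j = y' j) → K i x y = K i x' y')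
    (hnorm : ∀ i x y, ∑ a, ∑ b, K i (Function.update x i a) (Function.update y i b) = 1) :
    ∑ x, ∑ y, ∏ i, K i x y = 1 := by
  obtain ⟨x₀⟩ := ‹Nonempty (Fin n → X)›
  obtain ⟨y₀⟩ := ‹Nonempty (Fin n → Y)›
  have : Nonempty (Fin n → X × Y) := ⟨fun i => (x₀ i, y₀ i)⟩
  let e := Equiv.arrowProdEquivProdArrow (Fin n) (fun _ => X) (fun _ => Y)
  rw [← Fintype.sum_prod_type', ← e.sum_comp]
  refine sum_prod_causal_kernel_eq_one (fun i z => K i (e z).1 (e z).2)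
    (fun i z z' h => hcausal i _ _ _ _ (fun j hj => congrArg Prod.fst (h j hj))
      (fun j hj => congrArg Prod.snd (h j hj))) fun i z => ?_
  have hupd (p : X × Y) : e (Function.update z i p) =
      (Function.update (e z).1 i p.1, Function.update (e z).2 i p.2) :=
    Prod.ext (funext fun j => Function.apply_update (fun _ => Prod.fst) z i p j)
      (funext fun j => Function.apply_update (fun _ => Prod.snd) z i p j)
  simpa only [hupd, Fintype.sum_prod_type] using hnorm i (e z).1 (e z).2

section PrefixMarginal

variable {X Y : Type*} [Fintype X] [Fintype Y] [DecidableEq X] [DecidableEq Y] {n : ℕ}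
  (P : (Fin n → X) → (Fin n → Y) → ℝ)

noncomputable def prefixMarginal (k l : ℕ) (x : Fin n → X) (y : Fin n → Y) : ℝ :=
  ∑ x', ∑ y', if (∀ j : Fin n, (j : ℕ) < k → x' j = x j) ∧ (∀ j : Fin n, (j : ℕ) < l → y' j = y j)
    then P x' y' else 0

theorem prefixMarginal_congr {k l : ℕ} {x x' : Fin n → X} {y y' : Fin n → Y}
    (hx : ∀ j : Fin n, (j : ℕ) < k → x j = x' j) (hy : ∀ j : Fin n, (j : ℕ) < l → y j = y' j) :
    prefixMarginal P k l x y = prefixMarginal P k l x' y' :=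
  Finset.sum_congr rfl fun _ _ => Finset.sum_congr rfl fun _ _ => if_congr
    (and_congr (forall₂_congr fun j hj => by rw [hx j hj])
      (forall₂_congr fun j hj => by rw [hy j hj])) rfl rfl

theorem prefixMarginal_pos (hP : ∀ x y, 0 < P x y) (k l : ℕ) (x : Fin n → X) (y : Fin n → Y) :
    0 < prefixMarginal P k l x y := by
  have hnonneg (x' : Fin n → X) (y' : Fin n → Y) :
      0 ≤ if (∀ j : Fin n, (j : ℕ) < k → x' j = x j) ∧ (∀ j : Fin n, (j : ℕ) < l → y' j = y j)
        then P x' y' else 0 := by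
    split_ifs
    exacts [(hP x' y').le, le_rfl]
  calc 0 < P x y := hP x y
    _ ≤ _ := by
      refine le_trans ?_ (Finset.single_le_sum (fun x' _ => Finset.sum_nonneg fun y' _ =>
        hnonneg x' y') (Finset.mem_univ x))
      refine le_trans ?_ (Finset.single_le_sum (fun y' _ => hnonneg x y') (Finset.mem_univ y))
      simp

theorem prefixMarginal_zero_zero (x : Fin n → X) (y : Fin n → Y) :
    prefixMarginal P 0 0 x y = ∑ x', ∑ y', P x' y' := by
  simp [prefixMarginal]

theorem prefixMarginal_self (x : Fin n → X) (y : Fin n → Y) :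
    prefixMarginal P n n x y = P x y := by
  simp [prefixMarginal, ← funext_iff, ite_and]

theorem sum_prefixMarginal_update (i : Fin n) (l : ℕ) (x : Fin n → X) (y : Fin n → Y) :
    ∑ a, prefixMarginal P (i + 1) l (Function.update x i a) y = prefixMarginal P i l x y := by
  unfold prefixMarginal
  rw [Finset.sum_comm]
  refine Finset.sum_congr rfl fun x' _ => ?_
  rw [Finset.sum_comm]
  refine Finset.sum_congr rfl fun y' _ => ?_
  have hsplit (a : X) : (∀ j : Fin n, (j : ℕ) < i + 1 → x' j = Function.update x i a j) ↔
      x' i = a ∧ ∀ j : Fin n, (j : ℕ) < i → x' j = x j := by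
    refine ⟨fun h => ⟨by simpa using h i (Nat.lt_succ_self _), fun j hj => ?_⟩,
      fun ⟨hi, h⟩ j hj => ?_⟩
    · simpa [Fin.ne_of_lt hj] using h j (Nat.lt_succ_of_lt hj)
    · rcases (Nat.lt_succ_iff.1 hj).lt_or_eq with hj | hj
      · simpa [Fin.ne_of_lt hj] using h j hj
      · obtain rfl := Fin.ext hj
        simpa using hi
  simp only [hsplit, and_assoc, ite_and, Finset.sum_ite_eq, Finset.mem_univ, if_true]

/-- `condX P i x y` is `P(xᵢ | x^{i-1}, y^{i-1})`. -/
noncomputable def condX (i : Fin n) (x : Fin n → X) (y : Fin n → Y) : ℝ :=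
  prefixMarginal P (i + 1) i x y / prefixMarginal P i i x y

theorem sum_condX_update (hP : ∀ x y, 0 < P x y) (i : Fin n) (x : Fin n → X) (y : Fin n → Y) :
    ∑ a, condX P i (Function.update x i a) y = 1 := by
  have hden (a : X) : prefixMarginal P i i (Function.update x i a) y = prefixMarginal P i i x y :=
    prefixMarginal_congr P (fun j hj => Function.update_of_ne (Fin.ne_of_lt hj) _ _) fun _ _ => rfl
  simp only [condX, hden, ← Finset.sum_div, sum_prefixMarginal_update]
  exact div_self (prefixMarginal_pos P hP _ _ x y).ne'

end PrefixMarginal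

theorem condY_eq_prefixMarginal {X : Type*} [Fintype X] [DecidableEq X] {n : ℕ}
    (P : (Fin n → X) → (Fin n → Bool) → ℝ) (i : Fin n) (x : Fin n → X) (y : Fin n → Bool) :
    condY n P i x y = prefixMarginal P (i + 1) (i + 1) x y / prefixMarginal P (i + 1) i x y := by
  simp only [condY, prefixMarginal, Fin.le_def, Fin.lt_def, Nat.lt_succ_iff]

theorem prod_condY_mul_prod_condX {X : Type*} [Fintype X] [DecidableEq X] {n : ℕ}
    (P : (Fin n → X) → (Fin n → Bool) → ℝ) (hP : ∀ x y, 0 < P x y)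
    (hPsum : ∑ x, ∑ y, P x y = 1) (x : Fin n → X) (y : Fin n → Bool) :
    (∏ i, condY n P i x y) * ∏ i, condX P i x y = P x y := by
  set g : ℕ → ℝ := fun k => prefixMarginal P k k x y
  have hg (k : ℕ) : g k ≠ 0 := (prefixMarginal_pos P hP k k x y).ne'
  have htelescope (m : ℕ) : ∏ k ∈ Finset.range m, g (k + 1) / g k = g m / g 0 := by
    induction m with
    | zero => simp [hg]
    | succ m ih =>
      rw [Finset.prod_range_succ, ih]
      field_simp [hg]
  calc (∏ i, condY n P i x y) * ∏ i, condX P i x y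
      = ∏ i : Fin n, g (i + 1) / g i := by
        rw [← Finset.prod_mul_distrib]
        refine Finset.prod_congr rfl fun i _ => ?_
        rw [condY_eq_prefixMarginal, condX,
          div_mul_div_cancel₀ (prefixMarginal_pos P hP _ _ x y).ne']
    _ = g n / g 0 := by rw [Fin.prod_univ_eq_prod_range (fun k => g (k + 1) / g k), htelescope]
    _ = P x y := by simp [g, prefixMarginal_self, prefixMarginal_zero_zero, hPsum]

theorem Qb_pos {R Rbar : ℝ} (hR : 0 < R) (hRbar : 0 < Rbar) (b : Bool) : 0 < Qb R Rbar b := by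
  cases b <;> simp only [Qb] <;> positivity

theorem sum_one_add_mul_val_mul_Qb {R Rbar : ℝ} (h : R + Rbar ≠ 0) (c : ℝ) :
    ∑ b, (1 + c * val R Rbar b) * Qb R Rbar b = 1 := by
  simp only [Fintype.sum_bool, val, Qb, if_true, Bool.false_eq_true, if_false]
  field_simp
  ring

section Gambling

variable {X : Type*} [Fintype X] [DecidableEq X] {n : ℕ} {R Rbar : ℝ}
  {P : (Fin n → X) → (Fin n → Bool) → ℝ} {f : Fin n → (Fin n → X) → (Fin n → Bool) → ℝ}

noncomputable def betKernel (R Rbar : ℝ) (P : (Fin n → X) → (Fin n → Bool) → ℝ)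
    (f : Fin n → (Fin n → X) → (Fin n → Bool) → ℝ) (i : Fin n) (x : Fin n → X)
    (y : Fin n → Bool) : ℝ :=
  (1 + f i x y * val R Rbar (y i)) * Qb R Rbar (y i) * condX P i x y

theorem betKernel_congr
    (hcausal : ∀ (i : Fin n) (x x' : Fin n → X) (y y' : Fin n → Bool),
      (∀ j, j ≤ i → x j = x' j) → (∀ j, j < i → y j = y' j) → f i x y = f i x' y')
    (i : Fin n) (x x' : Fin n → X) (y y' : Fin n → Bool)
    (hx : ∀ j ≤ i, x j = x' j) (hy : ∀ j ≤ i, y j = y' j) :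
    betKernel R Rbar P f i x y = betKernel R Rbar P f i x' y' := by
  have hxk (k : ℕ) (hk : k ≤ i + 1) : ∀ j : Fin n, (j : ℕ) < k → x j = x' j :=
    fun j hj => hx j (Fin.le_def.2 (by omega))
  have hyk (k : ℕ) (hk : k ≤ i + 1) : ∀ j : Fin n, (j : ℕ) < k → y j = y' j :=
    fun j hj => hy j (Fin.le_def.2 (by omega))
  simp only [betKernel, condX, hy i le_rfl, hcausal i x x' y y' hx fun j hj => hy j hj.le,
    prefixMarginal_congr P (hxk (i + 1) le_rfl) (hyk i (by omega)),
    prefixMarginal_congr P (hxk i (by omega)) (hyk i (by omega))]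

theorem sum_betKernel_update (hR : 0 < R) (hRbar : 0 < Rbar) (hP : ∀ x y, 0 < P x y)
    (hcausal : ∀ (i : Fin n) (x x' : Fin n → X) (y y' : Fin n → Bool),
      (∀ j, j ≤ i → x j = x' j) → (∀ j, j < i → y j = y' j) → f i x y = f i x' y')
    (i : Fin n) (x : Fin n → X) (y : Fin n → Bool) :
    ∑ a, ∑ b, betKernel R Rbar P f i (Function.update x i a) (Function.update y i b) = 1 := by
  have hpast (b : Bool) : ∀ j < i, Function.update y i b j = y j :=
    fun j hj => Function.update_of_ne hj.ne _ _
  have hbet (a : X) (b : Bool) :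
      f i (Function.update x i a) (Function.update y i b) = f i (Function.update x i a) y :=
    hcausal i _ _ _ _ (fun _ _ => rfl) (hpast b)
  have hcondX (a : X) (b : Bool) :
      condX P i (Function.update x i a) (Function.update y i b) =
        condX P i (Function.update x i a) y := by
    simp only [condX]
    congr 1 <;> exact prefixMarginal_congr P (fun _ _ => rfl) fun j hj => hpast b j hj
  simp only [betKernel, hbet, hcondX, Function.update_self, ← Finset.sum_mul,
    sum_one_add_mul_val_mul_Qb (by positivity : R + Rbar ≠ 0), one_mul]
  exact sum_condX_update P hP i x y

theorem mul_exp_capital_gain_eq_prod_betKernel (hR : 0 < R) (hRbar : 0 < Rbar)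
    (hP : ∀ x y, 0 < P x y) (hPsum : ∑ x, ∑ y, P x y = 1)
    (hf : ∀ i x y, 0 < 1 + f i x y * val R Rbar (y i)) (x : Fin n → X) (y : Fin n → Bool) :
    P x y * Real.exp ((∑ i, Real.log (1 + f i x y * val R Rbar (y i)))
        - Real.log (∑ x', P x' y)
        - Real.log ((∏ i, condY n P i x y) / (∑ x', P x' y))
        + Real.log (∏ i, Qb R Rbar (y i))) = ∏ i, betKernel R Rbar P f i x y := by
  have hPy : 0 < ∑ x', P x' y := Finset.sum_pos (fun x' _ => hP x' y) ⟨x, Finset.mem_univ x⟩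
  have hC : 0 < ∏ i, condY n P i x y := Finset.prod_pos fun i _ => by
    rw [condY_eq_prefixMarginal]
    exact div_pos (prefixMarginal_pos P hP _ _ x y) (prefixMarginal_pos P hP _ _ x y)
  have hQ : 0 < ∏ i, Qb R Rbar (y i) := Finset.prod_pos fun i _ => Qb_pos hR hRbar _
  have hexponent : (∑ i, Real.log (1 + f i x y * val R Rbar (y i)))
        - Real.log (∑ x', P x' y)
        - Real.log ((∏ i, condY n P i x y) / (∑ x', P x' y))
        + Real.log (∏ i, Qb R Rbar (y i))
      = (∑ i, Real.log (1 + f i x y * val R Rbar (y i))) + Real.log (∏ i, Qb R Rbar (y i))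
        - Real.log (∏ i, condY n P i x y) := by
    rw [Real.log_div hC.ne' hPy.ne']
    ring
  rw [hexponent, Real.exp_sub, Real.exp_add, Real.exp_sum, Real.exp_log hQ, Real.exp_log hC,
    ← prod_condY_mul_prod_condX P hP hPsum x y]
  simp only [Real.exp_log (hf _ x y), betKernel, Finset.prod_mul_distrib]
  field_simp

end Gambling

/-- Jarzynski-type equality for binary gambling with memory effects and side
information: `⟨exp[n·g_n + s_{y^n} - i_{x^n→y^n} - s^Q_{y^n}]⟩ = 1`, where
`i_{x^n→y^n} = ln(P(y^n‖x^n)/P(y^n))` with `P(y^n‖x^n) = Π_i P(y_i | y^{i-1}, x^i)`,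
for betting fractions `f_i` depending only on `x^i` and `y^{i-1}`. -/
theorem stmt15 {X : Type*} [Fintype X] [DecidableEq X] (n : ℕ)
    (R Rbar : ℝ) (hR : 0 < R) (hRbar : 0 < Rbar)
    (P : (Fin n → X) → (Fin n → Bool) → ℝ)
    (hP : ∀ x y, 0 < P x y) (hPsum : ∑ x, ∑ y, P x y = 1)
    (f : Fin n → (Fin n → X) → (Fin n → Bool) → ℝ)
    (hcausal : ∀ (i : Fin n) (x x' : Fin n → X) (y y' : Fin n → Bool),
      (∀ j, j ≤ i → x j = x' j) → (∀ j, j < i → y j = y' j) → f i x y = f i x' y')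
    (hf : ∀ i x y, 0 < 1 + f i x y * val R Rbar (y i)) :
    ∑ x, ∑ y, P x y * Real.exp ((∑ i, Real.log (1 + f i x y * val R Rbar (y i)))
        - Real.log (∑ x', P x' y)
        - Real.log ((∏ i, condY n P i x y) / (∑ x', P x' y))
        + Real.log (∏ i, Qb R Rbar (y i))) = 1 := by
  have : Nonempty (Fin n → X) := by
    by_contra hempty
    rw [not_nonempty_iff] at hempty
    simp at hPsum
  simp only [mul_exp_capital_gain_eq_prod_betKernel hR hRbar hP hPsum hf]
  exact sum_sum_prod_causal_kernel_eq_one _ (betKernel_congr hcausal)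
    (sum_betKernel_update hR hRbar hP hcausal)
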